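/- arXiv:2605.12231 — 5 statements merged into one kernel-verified Lean document; each statement's English description precedes it below -/
import Mathlib

section
/- Let μ be a Borel probability measure on E with compact support A satisfying the small-ball assumption with constants c, α, r₀, and let u be its heat evolution. Then for every x ∈ E and every t with 0 < t ≤ r₀², u(x,t) ≥ c·t^{α/2}·(4πt)^{−d/2}·exp(−(d_A(x)+√t)²/(4t)). -/
/-! If `a` is a point of the support nearest to `x`, every `y` in the ball `B(a, √t)` satisfies
`‖x - y‖ ≤ d_A(x) + √t`, so the heat kernel is at least `(4πt)^{-d/2} exp(-(d_A(x)+√t)²/(4t))`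
there, while the small-ball assumption gives that ball mass at least `c (√t)^α = c t^{α/2}`. -/

open MeasureTheory Metric Filter Topology

noncomputable def heatKernel (d : ℕ) (t : ℝ) (z : EuclideanSpace ℝ (Fin d)) : ℝ :=
  (4 * Real.pi * t) ^ (-(d : ℝ) / 2) * Real.exp (-‖z‖ ^ 2 / (4 * t))

noncomputable def heatEvolution {d : ℕ} (μ : Measure (EuclideanSpace ℝ (Fin d)))
    (x : EuclideanSpace ℝ (Fin d)) (t : ℝ) : ℝ :=
  ∫ y, heatKernel d t (x - y) ∂μ

def msupport {E : Type*} [TopologicalSpace E] [MeasurableSpace E] (μ : Measure E) : Set E :=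
  {x | ∀ U ∈ nhds x, 0 < μ U}

def SmallBall {d : ℕ} (μ : Measure (EuclideanSpace ℝ (Fin d))) (c α r₀ : ℝ) : Prop :=
  ∀ x ∈ msupport μ, ∀ r : ℝ, 0 < r → r ≤ r₀ →
    ENNReal.ofReal (c * r ^ α) ≤ μ (Metric.closedBall x r)

lemma msupport_eq_support {E : Type*} [TopologicalSpace E] [MeasurableSpace E] (μ : Measure E) :
    msupport μ = μ.support :=
  Set.ext fun x => (Measure.mem_support_iff_forall x).symm

section HeatKernel

variable {d : ℕ} {t : ℝ}

lemma heatKernel_nonneg (ht : 0 ≤ t) (z : EuclideanSpace ℝ (Fin d)) : 0 ≤ heatKernel d t z :=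
  mul_nonneg (Real.rpow_nonneg (by positivity) _) (Real.exp_pos _).le

lemma heatKernel_le (ht : 0 ≤ t) (z : EuclideanSpace ℝ (Fin d)) :
    heatKernel d t z ≤ (4 * Real.pi * t) ^ (-(d : ℝ) / 2) := by
  refine mul_le_of_le_one_right (Real.rpow_nonneg (by positivity) _) (Real.exp_le_one_iff.2 ?_)
  exact div_nonpos_of_nonpos_of_nonneg (neg_nonpos.2 (by positivity)) (by positivity)

lemma le_heatKernel_of_norm_le (ht : 0 ≤ t) {z : EuclideanSpace ℝ (Fin d)} {R : ℝ}
    (hz : ‖z‖ ≤ R) :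
    (4 * Real.pi * t) ^ (-(d : ℝ) / 2) * Real.exp (-R ^ 2 / (4 * t)) ≤ heatKernel d t z := by
  refine mul_le_mul_of_nonneg_left (Real.exp_le_exp.2 ?_) (Real.rpow_nonneg (by positivity) _)
  gcongr

lemma continuous_heatKernel (d : ℕ) (t : ℝ) : Continuous (heatKernel d t) := by
  unfold heatKernel
  fun_prop

lemma integrable_heatKernel_sub (μ : Measure (EuclideanSpace ℝ (Fin d))) [IsFiniteMeasure μ]
    (ht : 0 ≤ t) (x : EuclideanSpace ℝ (Fin d)) :
    Integrable (fun y => heatKernel d t (x - y)) μ := by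
  refine Integrable.of_bound ((continuous_heatKernel d t).comp
    (continuous_const.sub continuous_id)).aestronglyMeasurable ((4 * Real.pi * t) ^ (-(d : ℝ) / 2))
    (Eventually.of_forall fun y => ?_)
  rw [Real.norm_of_nonneg (heatKernel_nonneg ht _)]
  exact heatKernel_le ht _

lemma mul_measureReal_le_heatEvolution (μ : Measure (EuclideanSpace ℝ (Fin d)))
    [IsFiniteMeasure μ] (ht : 0 ≤ t) {x : EuclideanSpace ℝ (Fin d)}
    {s : Set (EuclideanSpace ℝ (Fin d))} (hs : MeasurableSet s) {R : ℝ}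
    (hsR : ∀ y ∈ s, ‖x - y‖ ≤ R) :
    (4 * Real.pi * t) ^ (-(d : ℝ) / 2) * Real.exp (-R ^ 2 / (4 * t)) * μ.real s
      ≤ heatEvolution μ x t :=
  calc _ ≤ ∫ y in s, heatKernel d t (x - y) ∂μ :=
        setIntegral_ge_of_const_le_real hs (measure_ne_top μ s)
          (fun y hy => le_heatKernel_of_norm_le ht (hsR y hy))
          (integrable_heatKernel_sub μ ht x).integrableOn
    _ ≤ heatEvolution μ x t :=
        setIntegral_le_integral (integrable_heatKernel_sub μ ht x)
          (Eventually.of_forall fun _ => heatKernel_nonneg ht _)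

end HeatKernel

lemma SmallBall.le_measureReal_closedBall_sqrt {d : ℕ} {μ : Measure (EuclideanSpace ℝ (Fin d))}
    [IsFiniteMeasure μ] {c α r₀ : ℝ} (hSB : SmallBall μ c α r₀) (hr₀ : 0 ≤ r₀)
    {a : EuclideanSpace ℝ (Fin d)} (ha : a ∈ msupport μ) {t : ℝ} (ht : 0 < t)
    (ht' : t ≤ r₀ ^ 2) :
    c * t ^ (α / 2) ≤ μ.real (closedBall a (Real.sqrt t)) := by
  have hsqrt : Real.sqrt t ^ α = t ^ (α / 2) := by
    rw [Real.sqrt_eq_rpow, ← Real.rpow_mul ht.le, one_div_mul_eq_div]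
  have hball := hSB a ha (Real.sqrt t) (Real.sqrt_pos.2 ht)
    ((Real.sqrt_le_left hr₀).2 ht')
  rwa [hsqrt, ENNReal.ofReal_le_iff_le_toReal (measure_ne_top μ _)] at hball

theorem gaussian_lower_bound_heatEvolution_general
    (d : ℕ)
    (μ : Measure (EuclideanSpace ℝ (Fin d))) [IsProbabilityMeasure μ]
    (A : Set (EuclideanSpace ℝ (Fin d))) (hA : A = msupport μ) (hAcpt : IsCompact A)
    (c α r₀ : ℝ) (hr₀ : 0 < r₀)
    (hSB : SmallBall μ c α r₀)
    (x : EuclideanSpace ℝ (Fin d)) (t : ℝ) (ht : 0 < t) (ht' : t ≤ r₀ ^ 2) :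
    c * t ^ (α / 2) * ((4 * Real.pi * t) ^ (-(d : ℝ) / 2) *
        Real.exp (-(Metric.infDist x A + Real.sqrt t) ^ 2 / (4 * t)))
      ≤ heatEvolution μ x t := by
  have hAne : A.Nonempty := by
    rw [hA, msupport_eq_support]
    exact Measure.nonempty_support (IsProbabilityMeasure.ne_zero μ)
  obtain ⟨a, haA, hxa⟩ := hAcpt.exists_infDist_eq_dist hAne x
  have hnear : ∀ y ∈ closedBall a (Real.sqrt t), ‖x - y‖ ≤ infDist x A + Real.sqrt t := by
    intro y hy
    rw [← dist_eq_norm, hxa]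
    exact (dist_triangle x a y).trans (add_le_add_right (mem_closedBall'.1 hy) _)
  rw [mul_comm]
  exact (mul_le_mul_of_nonneg_left
      (hSB.le_measureReal_closedBall_sqrt hr₀.le (hA ▸ haA) ht ht') (by positivity)).trans
    (mul_measureReal_le_heatEvolution μ ht.le measurableSet_closedBall hnear)

theorem gaussian_lower_bound_heatEvolution
    (d : ℕ) (hd : 1 ≤ d)
    (μ : Measure (EuclideanSpace ℝ (Fin d))) [IsProbabilityMeasure μ]
    (A : Set (EuclideanSpace ℝ (Fin d))) (hA : A = msupport μ) (hAcpt : IsCompact A)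
    (c α r₀ : ℝ) (hc : 0 < c) (hα : 0 ≤ α) (hr₀ : 0 < r₀)
    (hSB : SmallBall μ c α r₀)
    (x : EuclideanSpace ℝ (Fin d)) (t : ℝ) (ht : 0 < t) (ht' : t ≤ r₀ ^ 2) :
    c * t ^ (α / 2) * ((4 * Real.pi * t) ^ (-(d : ℝ) / 2) *
        Real.exp (-(Metric.infDist x A + Real.sqrt t) ^ 2 / (4 * t)))
      ≤ heatEvolution μ x t :=
  gaussian_lower_bound_heatEvolution_general d μ A hA hAcpt c α r₀ hr₀ hSB x t ht ht'
end

section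
/- Assume the empirical setting, let λ ∈ ℝ, and let x₀ ∈ E have a unique nearest point x_{k*} in A₁ and a unique nearest point y_{ℓ*} in A₂. Then there exist an open neighborhood U of x₀ and constants C > 0, η > 0 such that for all x ∈ U and all t > 0, ‖∇F_λ(x,t) − 2(x − λ·x_{k*} − (1−λ)·y_{ℓ*})‖ ≤ C·e^{−η/t}. -/
/-!
An empirical heat evolution is a Gaussian mixture up to the factor `(4πt)^{-d/2}`, so
`-4t log u(·,t)` has gradient `2 (x - m(x,t))`, where `m(x,t)` is the mean of the atoms under the
softmax (posterior) weights `w_k e^{-‖x - p_k‖²/4t} / Σ_j w_j e^{-‖x - p_j‖²/4t}`. Near `x₀` every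
atom other than the unique nearest one is farther by a uniform margin `δ` in squared distance, so
its weight is `O(e^{-δ/4t})` and `m(x,t)` lies within `O(e^{-δ/4t})` of the nearest atom.
Combining the two mixtures linearly in `λ` gives the bound, with `η` a quarter of the smaller
of the two margins.
-/

open MeasureTheory Metric Filter Topology

/-- The rescaled mixed potential `F_λ(x,t) = -4t (λ log u₁(x,t) + (1-λ) log u₂(x,t))`. -/
noncomputable def mixedPotential {d : ℕ} (μ₁ μ₂ : Measure (EuclideanSpace ℝ (Fin d))) (lam : ℝ)
    (x : EuclideanSpace ℝ (Fin d)) (t : ℝ) : ℝ :=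
  -4 * t * (lam * Real.log (heatEvolution μ₁ x t) +
    (1 - lam) * Real.log (heatEvolution μ₂ x t))

/-- The set `Π_A(x)` of nearest points of `x` in `A`. -/
def nearestPts {d : ℕ} (A : Set (EuclideanSpace ℝ (Fin d)))
    (x : EuclideanSpace ℝ (Fin d)) : Set (EuclideanSpace ℝ (Fin d)) :=
  {a ∈ A | ‖x - a‖ = Metric.infDist x A}

open Real

section NearestPoint

variable {F : Type*} [SeminormedAddCommGroup F] {ι : Type*} [Finite ι] {p : ι → F} {x₀ : F}
  {i : ι}

lemma exists_pos_eventually_norm_sub_sq_add_le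
    (h : ∀ k, p k ≠ p i → ‖x₀ - p i‖ < ‖x₀ - p k‖) :
    ∃ δ > 0, ∀ᶠ x in 𝓝 x₀, ∀ k, p k ≠ p i → ‖x - p i‖ ^ 2 + δ ≤ ‖x - p k‖ ^ 2 := by
  classical
  have : Nonempty ι := ⟨i⟩
  let gap k := if p k = p i then 1 else ‖x₀ - p k‖ ^ 2 - ‖x₀ - p i‖ ^ 2
  have hgap : ∀ k, 0 < gap k := fun k => by
    by_cases hk : p k = p i
    · simp [gap, hk]
    · simpa [gap, hk] using pow_lt_pow_left₀ (h k hk) (norm_nonneg _) two_ne_zero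
  obtain ⟨k₀, hk₀⟩ := Finite.exists_min gap
  refine ⟨gap k₀ / 2, half_pos (hgap k₀), eventually_all.2 fun k => ?_⟩
  by_cases hk : p k = p i
  · exact Eventually.of_forall fun _ hk' => absurd hk hk'
  have hlt : ‖x₀ - p i‖ ^ 2 + gap k₀ / 2 < ‖x₀ - p k‖ ^ 2 := by
    have := hk₀ k
    simp only [gap, hk, if_false] at this
    linarith [hgap k₀]
  refine (ContinuousAt.eventually_lt ?_ ?_ hlt).mono fun x hx _ => hx.le <;> fun_prop

end NearestPoint

section GaussianMixture

variable {F : Type*} [NormedAddCommGroup F] {ι : Type*} [Fintype ι]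

noncomputable def gaussianMixture (w : ι → ℝ) (p : ι → F) (t : ℝ) (x : F) : ℝ :=
  ∑ k, w k * exp (-‖x - p k‖ ^ 2 / (4 * t))

noncomputable def posteriorWeight (w : ι → ℝ) (p : ι → F) (t : ℝ) (x : F) (k : ι) : ℝ :=
  w k * exp (-‖x - p k‖ ^ 2 / (4 * t)) / gaussianMixture w p t x

noncomputable def posteriorMean [NormedSpace ℝ F] (w : ι → ℝ) (p : ι → F) (t : ℝ) (x : F) : F :=
  ∑ k, posteriorWeight w p t x k • p k

variable {w : ι → ℝ} (p : ι → F) (t : ℝ)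

lemma gaussianMixture_pos [Nonempty ι] (hw : ∀ k, 0 < w k) (x : F) :
    0 < gaussianMixture w p t x :=
  Finset.sum_pos (fun k _ => mul_pos (hw k) (exp_pos _)) Finset.univ_nonempty

lemma posteriorWeight_nonneg (hw : ∀ k, 0 < w k) (x : F) (k : ι) :
    0 ≤ posteriorWeight w p t x k :=
  have : Nonempty ι := ⟨k⟩
  div_nonneg (mul_pos (hw k) (exp_pos _)).le (gaussianMixture_pos p t hw x).le

lemma sum_posteriorWeight [Nonempty ι] (hw : ∀ k, 0 < w k) (x : F) :
    ∑ k, posteriorWeight w p t x k = 1 := by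
  simp_rw [posteriorWeight, ← Finset.sum_div]
  exact div_self (gaussianMixture_pos p t hw x).ne'

lemma posteriorWeight_le (hw : ∀ k, 0 < w k) (x : F) (i k : ι) :
    posteriorWeight w p t x k ≤
      w k / w i * exp ((‖x - p i‖ ^ 2 - ‖x - p k‖ ^ 2) / (4 * t)) := by
  have hi : 0 < w i * exp (-‖x - p i‖ ^ 2 / (4 * t)) := mul_pos (hw i) (exp_pos _)
  have hS : w i * exp (-‖x - p i‖ ^ 2 / (4 * t)) ≤ gaussianMixture w p t x :=
    Finset.single_le_sum (f := fun k => w k * exp (-‖x - p k‖ ^ 2 / (4 * t)))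
      (fun k _ => (mul_pos (hw k) (exp_pos _)).le) (Finset.mem_univ i)
  have hexp : exp ((‖x - p i‖ ^ 2 - ‖x - p k‖ ^ 2) / (4 * t)) =
      exp (-‖x - p k‖ ^ 2 / (4 * t)) / exp (-‖x - p i‖ ^ 2 / (4 * t)) := by
    rw [← exp_sub]; ring_nf
  calc posteriorWeight w p t x k
      ≤ w k * exp (-‖x - p k‖ ^ 2 / (4 * t)) / (w i * exp (-‖x - p i‖ ^ 2 / (4 * t))) :=
        div_le_div_of_nonneg_left (mul_pos (hw k) (exp_pos _)).le hi hS
    _ = w k / w i * exp ((‖x - p i‖ ^ 2 - ‖x - p k‖ ^ 2) / (4 * t)) := by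
        rw [hexp]; field_simp

variable [NormedSpace ℝ F]

lemma sub_posteriorMean [Nonempty ι] (hw : ∀ k, 0 < w k) (x c : F) :
    c - posteriorMean w p t x = ∑ k, posteriorWeight w p t x k • (c - p k) := by
  simp only [posteriorMean, smul_sub, Finset.sum_sub_distrib, ← Finset.sum_smul,
    sum_posteriorWeight p t hw, one_smul]

lemma norm_sub_posteriorMean_le (hw : ∀ k, 0 < w k) (ht : 0 < t) {x : F} {i : ι} {δ : ℝ}
    (hgap : ∀ k, p k ≠ p i → ‖x - p i‖ ^ 2 + δ ≤ ‖x - p k‖ ^ 2) :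
    ‖p i - posteriorMean w p t x‖ ≤ (∑ k, w k / w i * ‖p i - p k‖) * exp (-δ / (4 * t)) := by
  have : Nonempty ι := ⟨i⟩
  rw [sub_posteriorMean p t hw, Finset.sum_mul]
  refine (norm_sum_le _ _).trans (Finset.sum_le_sum fun k _ => ?_)
  rw [norm_smul, Real.norm_of_nonneg (posteriorWeight_nonneg p t hw x k)]
  by_cases hk : p k = p i
  · simp [hk]
  have hweight : posteriorWeight w p t x k ≤ w k / w i * exp (-δ / (4 * t)) := by
    refine (posteriorWeight_le p t hw x i k).trans ?_
    gcongr
    · exact div_nonneg (hw k).le (hw i).le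
    · linarith [hgap k hk]
  calc posteriorWeight w p t x k * ‖p i - p k‖
      ≤ w k / w i * exp (-δ / (4 * t)) * ‖p i - p k‖ := by gcongr
    _ = _ := by ring

lemma exists_pos_eventually_norm_sub_posteriorMean_le (hw : ∀ k, 0 < w k) {x₀ : F} {i : ι}
    (h : ∀ k, p k ≠ p i → ‖x₀ - p i‖ < ‖x₀ - p k‖) :
    ∃ B ≥ 0, ∃ η > 0, ∀ᶠ x in 𝓝 x₀, ∀ t > 0,
      ‖p i - posteriorMean w p t x‖ ≤ B * exp (-η / t) := by
  obtain ⟨δ, hδ, hgap⟩ := exists_pos_eventually_norm_sub_sq_add_le h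
  refine ⟨∑ k, w k / w i * ‖p i - p k‖, Finset.sum_nonneg fun k _ =>
      mul_nonneg (div_nonneg (hw k).le (hw i).le) (norm_nonneg _),
    δ / 4, by positivity, hgap.mono fun x hx t ht => ?_⟩
  rw [show -(δ / 4) / t = -δ / (4 * t) by ring]
  exact norm_sub_posteriorMean_le p t hw ht hx

end GaussianMixture

section Gradient

open InnerProductSpace

variable {F : Type*} [NormedAddCommGroup F] [InnerProductSpace ℝ F]

lemma hasFDerivAt_exp_neg_norm_sub_sq_div (p x : F) (t : ℝ) :
    HasFDerivAt (fun y => exp (-‖y - p‖ ^ 2 / (4 * t)))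
      ((-(2 * t)⁻¹ * exp (-‖x - p‖ ^ 2 / (4 * t))) • innerSL ℝ (x - p)) x := by
  have hexponent : HasFDerivAt (fun y => -‖y - p‖ ^ 2 / (4 * t))
      (-(2 * t)⁻¹ • innerSL ℝ (x - p)) x := by
    refine ((((hasFDerivAt_id x).sub_const p).norm_sq.const_mul (-(4 * t)⁻¹)).congr_fderiv ?_)
      |>.congr_of_eventuallyEq (.of_forall fun y => ?_)
    · ext v
      simp only [id, smul_apply, ContinuousLinearMap.comp_id, smul_eq_mul, nsmul_eq_mul]
      ring
    · simp only [id]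
      ring
  simpa only [smul_smul, mul_comm] using hexponent.exp

variable {ι : Type*} [Fintype ι] [Nonempty ι] {w : ι → ℝ} (p : ι → F) (t : ℝ)

lemma hasFDerivAt_gaussianMixture (hw : ∀ k, 0 < w k) (x : F) :
    HasFDerivAt (gaussianMixture w p t)
      ((-(2 * t)⁻¹ * gaussianMixture w p t x) • innerSL ℝ (x - posteriorMean w p t x)) x := by
  have hsum := HasFDerivAt.fun_sum (u := Finset.univ) fun k _ =>
    (hasFDerivAt_exp_neg_norm_sub_sq_div (p k) x t).const_mul (w k)
  refine hsum.congr_fderiv ?_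
  rw [sub_posteriorMean p t hw, map_sum, Finset.smul_sum]
  refine Finset.sum_congr rfl fun k _ => ?_
  rw [map_smul, smul_smul, smul_smul, posteriorWeight]
  congr 1
  field_simp [(gaussianMixture_pos p t hw x).ne']

lemma hasGradientAt_neg_log_gaussianMixture [CompleteSpace F] (hw : ∀ k, 0 < w k) (ht : t ≠ 0)
    (x : F) :
    HasGradientAt (fun y => -4 * t * log (gaussianMixture w p t y))
      ((2 : ℝ) • (x - posteriorMean w p t x)) x := by
  have hS := gaussianMixture_pos p t hw x
  rw [hasGradientAt_iff_hasFDerivAt]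
  refine (((hasFDerivAt_gaussianMixture p t hw x).log hS.ne').const_mul (-4 * t)).congr_fderiv ?_
  ext v
  simp only [map_smul, smul_apply, toDual_apply_apply, innerSL_apply_apply, smul_eq_mul]
  field_simp
  ring

end Gradient

section HeatFlow

variable {d : ℕ} {ι : Type*} [Fintype ι] {w : ι → ℝ} (p : ι → EuclideanSpace ℝ (Fin d))

lemma heatEvolution_sum_dirac (hw : ∀ k, 0 ≤ w k) (x : EuclideanSpace ℝ (Fin d)) (t : ℝ) :
    heatEvolution (∑ k, ENNReal.ofReal (w k) • Measure.dirac (p k)) x t =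
      (4 * π * t) ^ (-(d : ℝ) / 2) * gaussianMixture w p t x := by
  rw [heatEvolution, integral_finsetSum_measure fun k _ =>
    (integrable_dirac (by simp)).smul_measure ENNReal.ofReal_ne_top]
  simp only [integral_smul_measure, integral_dirac, ENNReal.toReal_ofReal (hw _), heatKernel,
    gaussianMixture, Finset.mul_sum, smul_eq_mul]
  exact Finset.sum_congr rfl fun k _ => by ring

variable {ι' : Type*} [Fintype ι'] [Nonempty ι] [Nonempty ι'] {w' : ι' → ℝ}
  (p' : ι' → EuclideanSpace ℝ (Fin d))

lemma hasGradientAt_mixedPotential_sum_dirac (hw : ∀ k, 0 < w k) (hw' : ∀ k, 0 < w' k)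
    (lam : ℝ) {t : ℝ} (ht : 0 < t) (x : EuclideanSpace ℝ (Fin d)) :
    HasGradientAt
      (fun y => mixedPotential (∑ k, ENNReal.ofReal (w k) • Measure.dirac (p k))
        (∑ k, ENNReal.ofReal (w' k) • Measure.dirac (p' k)) lam y t)
      (lam • (2 : ℝ) • (x - posteriorMean w p t x) +
        (1 - lam) • (2 : ℝ) • (x - posteriorMean w' p' t x)) x := by
  set c := (4 * π * t) ^ (-(d : ℝ) / 2)
  have hc : 0 < c := by positivity
  have hF : (fun y => mixedPotential (∑ k, ENNReal.ofReal (w k) • Measure.dirac (p k))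
        (∑ k, ENNReal.ofReal (w' k) • Measure.dirac (p' k)) lam y t) =
      fun y => -4 * t * log c + (lam * (-4 * t * log (gaussianMixture w p t y)) +
        (1 - lam) * (-4 * t * log (gaussianMixture w' p' t y))) := by
    ext y
    rw [mixedPotential, heatEvolution_sum_dirac p (fun k => (hw k).le),
      heatEvolution_sum_dirac p' (fun k => (hw' k).le), log_mul hc.ne'
      (gaussianMixture_pos p t hw y).ne', log_mul hc.ne' (gaussianMixture_pos p' t hw' y).ne']
    ring
  have h := hasGradientAt_neg_log_gaussianMixture p t hw ht.ne' x
  have h' := hasGradientAt_neg_log_gaussianMixture p' t hw' ht.ne' x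
  rw [hasGradientAt_iff_hasFDerivAt] at h h' ⊢
  rw [hF]
  refine (((h.const_mul lam).add (h'.const_mul (1 - lam))).const_add _).congr_fderiv ?_
  simp only [map_add, map_smul]

end HeatFlow

lemma norm_sub_lt_of_nearestPts_eq_singleton {d : ℕ} {ι : Type*}
    {p : ι → EuclideanSpace ℝ (Fin d)} {x₀ : EuclideanSpace ℝ (Fin d)} {i : ι}
    (h : nearestPts (Set.range p) x₀ = {p i}) (k : ι) (hk : p k ≠ p i) :
    ‖x₀ - p i‖ < ‖x₀ - p k‖ := by
  have hi : p i ∈ nearestPts (Set.range p) x₀ := h ▸ Set.mem_singleton _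
  have hle : ‖x₀ - p i‖ ≤ ‖x₀ - p k‖ := by
    rw [hi.2, ← dist_eq_norm]
    exact infDist_le_dist_of_mem ⟨k, rfl⟩
  refine hle.lt_of_ne fun heq => hk ?_
  have hk' : p k ∈ nearestPts (Set.range p) x₀ := ⟨⟨k, rfl⟩, heq.symm.trans hi.2⟩
  rwa [h] at hk'

theorem quantitative_gradient_convergence_outside_interface_general
    (d : ℕ)
    (n₁ n₂ : ℕ)
    (xs : Fin n₁ → EuclideanSpace ℝ (Fin d)) (ys : Fin n₂ → EuclideanSpace ℝ (Fin d))
    (w₁ : Fin n₁ → ℝ) (w₂ : Fin n₂ → ℝ)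
    (hw₁pos : ∀ k, 0 < w₁ k) (hw₂pos : ∀ ℓ, 0 < w₂ ℓ)
    (μ₁ μ₂ : Measure (EuclideanSpace ℝ (Fin d)))
    (hμ₁ : μ₁ = ∑ k, ENNReal.ofReal (w₁ k) • Measure.dirac (xs k))
    (hμ₂ : μ₂ = ∑ ℓ, ENNReal.ofReal (w₂ ℓ) • Measure.dirac (ys ℓ))
    (A₁ A₂ : Set (EuclideanSpace ℝ (Fin d)))
    (hA₁ : A₁ = Set.range xs) (hA₂ : A₂ = Set.range ys)
    (lam : ℝ)
    (x₀ : EuclideanSpace ℝ (Fin d))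
    (kstar : Fin n₁) (lstar : Fin n₂)
    (hk : nearestPts A₁ x₀ = {xs kstar})
    (hl : nearestPts A₂ x₀ = {ys lstar}) :
    ∃ U : Set (EuclideanSpace ℝ (Fin d)), IsOpen U ∧ x₀ ∈ U ∧
      ∃ C > (0 : ℝ), ∃ η > (0 : ℝ),
        ∀ x ∈ U, ∀ t : ℝ, 0 < t →
          ‖gradient (fun x' => mixedPotential μ₁ μ₂ lam x' t) x -
              (2 : ℝ) • (x - lam • xs kstar - (1 - lam) • ys lstar)‖
            ≤ C * Real.exp (-η / t) := by
  subst hA₁ hA₂ hμ₁ hμ₂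
  have : Nonempty (Fin n₁) := ⟨kstar⟩
  have : Nonempty (Fin n₂) := ⟨lstar⟩
  obtain ⟨B₁, hB₁, η₁, hη₁, h₁⟩ := exists_pos_eventually_norm_sub_posteriorMean_le xs hw₁pos
    (norm_sub_lt_of_nearestPts_eq_singleton hk)
  obtain ⟨B₂, hB₂, η₂, hη₂, h₂⟩ := exists_pos_eventually_norm_sub_posteriorMean_le ys hw₂pos
    (norm_sub_lt_of_nearestPts_eq_singleton hl)
  obtain ⟨U, hU, hUo, hx₀U⟩ := _root_.eventually_nhds_iff.1 (h₁.and h₂)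
  set η := min η₁ η₂
  refine ⟨U, hUo, hx₀U, 2 * (|lam| * B₁ + |1 - lam| * B₂) + 1, by positivity, η,
    lt_min hη₁ hη₂, fun x hx t ht => ?_⟩
  rw [(hasGradientAt_mixedPotential_sum_dirac xs ys hw₁pos hw₂pos lam ht x).gradient]
  calc _ = ‖(2 * lam) • (xs kstar - posteriorMean w₁ xs t x) +
        (2 * (1 - lam)) • (ys lstar - posteriorMean w₂ ys t x)‖ := by congr 1; module
    _ ≤ 2 * |lam| * (B₁ * exp (-η / t)) + 2 * |1 - lam| * (B₂ * exp (-η / t)) := by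
        refine (norm_add_le _ _).trans ?_
        simp only [norm_smul, norm_mul, Real.norm_ofNat, Real.norm_eq_abs]
        gcongr
        · exact ((hU x hx).1 t ht).trans (by gcongr; exact min_le_left η₁ η₂)
        · exact ((hU x hx).2 t ht).trans (by gcongr; exact min_le_right η₁ η₂)
    _ ≤ _ := by nlinarith [exp_pos (-η / t)]

theorem quantitative_gradient_convergence_outside_interface
    (d : ℕ) (hd : 1 ≤ d)
    (n₁ n₂ : ℕ)
    (xs : Fin n₁ → EuclideanSpace ℝ (Fin d)) (ys : Fin n₂ → EuclideanSpace ℝ (Fin d))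
    (w₁ : Fin n₁ → ℝ) (w₂ : Fin n₂ → ℝ)
    (hw₁pos : ∀ k, 0 < w₁ k) (hw₂pos : ∀ ℓ, 0 < w₂ ℓ)
    (hw₁sum : ∑ k, w₁ k = 1) (hw₂sum : ∑ ℓ, w₂ ℓ = 1)
    (μ₁ μ₂ : Measure (EuclideanSpace ℝ (Fin d)))
    (hμ₁ : μ₁ = ∑ k, ENNReal.ofReal (w₁ k) • Measure.dirac (xs k))
    (hμ₂ : μ₂ = ∑ ℓ, ENNReal.ofReal (w₂ ℓ) • Measure.dirac (ys ℓ))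
    (A₁ A₂ : Set (EuclideanSpace ℝ (Fin d)))
    (hA₁ : A₁ = Set.range xs) (hA₂ : A₂ = Set.range ys)
    (lam : ℝ)
    (x₀ : EuclideanSpace ℝ (Fin d))
    (kstar : Fin n₁) (lstar : Fin n₂)
    (hk : nearestPts A₁ x₀ = {xs kstar})
    (hl : nearestPts A₂ x₀ = {ys lstar}) :
    ∃ U : Set (EuclideanSpace ℝ (Fin d)), IsOpen U ∧ x₀ ∈ U ∧
      ∃ C > (0 : ℝ), ∃ η > (0 : ℝ),
        ∀ x ∈ U, ∀ t : ℝ, 0 < t →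
          ‖gradient (fun x' => mixedPotential μ₁ μ₂ lam x' t) x -
              (2 : ℝ) • (x - lam • xs kstar - (1 - lam) • ys lstar)‖
            ≤ C * Real.exp (-η / t) :=
  quantitative_gradient_convergence_outside_interface_general d n₁ n₂ xs ys w₁ w₂ hw₁pos hw₂pos μ₁
    μ₂ hμ₁ hμ₂ A₁ A₂ hA₁ hA₂ lam x₀ kstar lstar hk hl
end

section
/- Let I = (a,b) ⊂ ℝ be a bounded open interval and M > 0. Let p_j, p : I → E be measurable with ‖p_j(τ)‖ ≤ M and ‖p(τ)‖ ≤ M for a.e. τ ∈ I. Assume weak-* convergence: for every integrable φ : I → E, ∫_I ⟪φ(τ), p_j(τ)⟫ dτ → ∫_I ⟪φ(τ), p(τ)⟫ dτ as j → ∞. Let C : I → Set E assign to a.e. τ a nonempty closed convex set contained in the closed ball of radius M centered at 0, such that for every ξ ∈ E the function τ ↦ sup_{q ∈ C(τ)} ⟪ξ, q⟫ is measurable, and such that dist(p_j(τ), C(τ)) → 0 as j → ∞ for a.e. τ ∈ I. Then p(τ) ∈ C(τ) for a.e. τ ∈ I. -/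
/-!
Fix `ξ`. Testing the weak-* convergence against `ξ • 1_A` shows that `∫_A ⟪ξ, q⟫` is the limit
of `∫_A ⟪ξ, p_j⟫` for every measurable `A`, so `⟪ξ, q(τ)⟫` lies a.e. below every eventual upper
bound of `⟪ξ, p_j(τ)⟫`. Since `dist(p_j(τ), C(τ)) → 0`, the support function
`max_{y ∈ C(τ)} ⟪ξ, y⟫` is such a bound. This holds simultaneously for all `ξ` in a countable
dense set, and a Hahn–Banach separation of `q(τ)` from the closed convex set `C(τ)` then forces
`q(τ) ∈ C(τ)`.
-/

open MeasureTheory Metric Filter Topology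
open scoped RealInnerProductSpace

section SetIntegralLimits

variable {α : Type*} [MeasurableSpace α] {μ : Measure α} [IsFiniteMeasure μ]
  {u : ℕ → α → ℝ} {f : α → ℝ}

theorem ae_restrict_le_of_tendsto_setIntegral (hu : ∀ j, Integrable (u j) μ)
    (hf : Integrable f μ)
    (hlim : ∀ A, MeasurableSet A →
      Tendsto (fun j => ∫ x in A, u j x ∂μ) atTop (𝓝 (∫ x in A, f x ∂μ)))
    {S : Set α} (hS : MeasurableSet S) {c : ℝ} {N : ℕ} (hle : ∀ j ≥ N, ∀ x ∈ S, u j x ≤ c) :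
    ∀ᵐ x ∂μ.restrict S, f x ≤ c := by
  refine ae_le_of_forall_setIntegral_le hf.restrict (integrable_const c) fun A hA _ => ?_
  rw [Measure.restrict_restrict hA]
  refine le_of_tendsto (hlim _ (hA.inter hS)) (eventually_atTop.mpr ⟨N, fun j hj => ?_⟩)
  exact setIntegral_mono_on (hu j).integrableOn (integrable_const c).integrableOn
    (hA.inter hS) fun x hx => hle j hj x hx.2

theorem ae_le_of_eventually_le_of_tendsto_setIntegral (hmeas : ∀ j, Measurable (u j))
    (hu : ∀ j, Integrable (u j) μ) (hf : Integrable f μ)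
    (hlim : ∀ A, MeasurableSet A →
      Tendsto (fun j => ∫ x in A, u j x ∂μ) atTop (𝓝 (∫ x in A, f x ∂μ))) :
    ∀ᵐ x ∂μ, ∀ c : ℝ, (∀ᶠ j in atTop, u j x ≤ c) → f x ≤ c := by
  have hS : ∀ (r : ℚ) (N : ℕ), MeasurableSet {x | ∀ j ≥ N, u j x ≤ r} := fun r N => by
    simp only [Set.ofPred_forall]
    exact .iInter fun j => .iInter fun _ => measurableSet_le (hmeas j) measurable_const
  have hr : ∀ (r : ℚ) (N : ℕ), ∀ᵐ x ∂μ, x ∈ {x | ∀ j ≥ N, u j x ≤ r} → f x ≤ r :=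
    fun r N => (ae_restrict_iff' (hS r N)).mp <|
      ae_restrict_le_of_tendsto_setIntegral hu hf hlim (hS r N) fun j hj x hx => hx j hj
  filter_upwards [ae_all_iff.mpr fun r => ae_all_iff.mpr (hr r)] with x hx c hc
  by_contra! hcf
  obtain ⟨r, hcr, hrf⟩ := exists_rat_btwn hcf
  obtain ⟨N, hN⟩ := eventually_atTop.mp hc
  exact (hx r N fun j hj => (hN j hj).trans hcr.le).not_gt hrf

end SetIntegralLimits

section InnerProduct

variable {E : Type*} [NormedAddCommGroup E] [InnerProductSpace ℝ E]

theorem tendsto_setIntegral_inner_of_weak_tendsto {α : Type*} [MeasurableSpace α]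
    {μ : Measure α} [IsFiniteMeasure μ] {p : ℕ → α → E} {q : α → E}
    (hweak : ∀ φ : α → E, Integrable φ μ →
      Tendsto (fun j => ∫ x, ⟪φ x, p j x⟫ ∂μ) atTop (𝓝 (∫ x, ⟪φ x, q x⟫ ∂μ)))
    (ξ : E) {A : Set α} (hA : MeasurableSet A) :
    Tendsto (fun j => ∫ x in A, ⟪ξ, p j x⟫ ∂μ) atTop (𝓝 (∫ x in A, ⟪ξ, q x⟫ ∂μ)) := by
  have hind : ∀ g : α → E,
      (fun x => ⟪A.indicator (fun _ => ξ) x, g x⟫) = A.indicator fun x => ⟪ξ, g x⟫ := by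
    intro g
    ext x
    by_cases hx : x ∈ A <;> simp [hx]
  simpa only [hind, integral_indicator hA] using
    hweak _ ((integrable_const ξ).indicator hA)

theorem inner_le_add_norm_mul_infDist {K : Set E} (hK : IsCompact K) (hne : K.Nonempty)
    {ξ : E} {s : ℝ} (hs : ∀ z ∈ K, ⟪ξ, z⟫ ≤ s) (x : E) :
    ⟪ξ, x⟫ ≤ s + ‖ξ‖ * infDist x K := by
  obtain ⟨z, hzK, hz⟩ := hK.exists_infDist_eq_dist hne x
  calc ⟪ξ, x⟫ = ⟪ξ, z⟫ + ⟪ξ, x - z⟫ := by rw [inner_sub_right]; ring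
    _ ≤ s + ‖ξ‖ * ‖x - z‖ := add_le_add (hs z hzK) (real_inner_le_norm _ _)
    _ = s + ‖ξ‖ * infDist x K := by rw [hz, dist_eq_norm]

theorem eventually_inner_le_of_tendsto_infDist {K : Set E} (hK : IsCompact K)
    (hne : K.Nonempty) {ξ : E} {s : ℝ} (hs : ∀ z ∈ K, ⟪ξ, z⟫ ≤ s) {x : ℕ → E}
    (hx : Tendsto (fun j => infDist (x j) K) atTop (𝓝 0)) {ε : ℝ} (hε : 0 < ε) :
    ∀ᶠ j in atTop, ⟪ξ, x j⟫ ≤ s + ε := by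
  have hlim : Tendsto (fun j => s + ‖ξ‖ * infDist (x j) K) atTop (𝓝 (s + ‖ξ‖ * 0)) :=
    tendsto_const_nhds.add (hx.const_mul _)
  rw [mul_zero, add_zero] at hlim
  filter_upwards [hlim.eventually (ge_mem_nhds (lt_add_of_pos_right s hε))] with j hj
  exact (inner_le_add_norm_mul_infDist hK hne hs (x j)).trans hj

theorem mem_of_forall_mem_dense_exists_inner_le [CompleteSpace E] {K : Set E}
    (hconv : Convex ℝ K) (hcl : IsClosed K) {R : ℝ} (hR : K ⊆ closedBall 0 R)
    {D : Set E} (hD : Dense D) {x : E} (hx : ∀ ξ ∈ D, ∃ y ∈ K, ⟪ξ, x⟫ ≤ ⟪ξ, y⟫) :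
    x ∈ K := by
  by_contra hxK
  obtain ⟨f, w, hfK, hwx⟩ := geometric_hahn_banach_closed_point hconv hcl hxK
  set ξ₀ := (InnerProductSpace.toDual ℝ E).symm f
  have hξ₀ : ∀ z, ⟪ξ₀, z⟫ = f z := fun z => InnerProductSpace.toDual_symm_apply
  set ε := f x - w
  have hε : 0 < ε := sub_pos.mpr hwx
  have hδ : 0 < ε / (‖x‖ + |R| + 1) := by positivity
  obtain ⟨ξ, hξ, hξD⟩ := Metric.dense_iff.mp hD ξ₀ _ hδ
  obtain ⟨y, hyK, hy⟩ := hx ξ hξD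
  have hxy : ‖x - y‖ ≤ ‖x‖ + |R| := by
    have hyR : ‖y‖ ≤ |R| := (mem_closedBall_zero_iff.mp (hR hyK)).trans (le_abs_self R)
    linarith [norm_sub_le x y]
  -- moving `ξ₀` to the nearby `ξ ∈ D` changes `⟪·, x - y⟫` by less than the separation gap `ε`
  have hpert : |⟪ξ - ξ₀, x - y⟫| < ε :=
    calc |⟪ξ - ξ₀, x - y⟫| ≤ ‖ξ - ξ₀‖ * ‖x - y‖ := abs_real_inner_le_norm _ _
      _ ≤ ε / (‖x‖ + |R| + 1) * (‖x‖ + |R|) :=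
        mul_le_mul (dist_eq_norm ξ ξ₀ ▸ (mem_ball.mp hξ).le) hxy (norm_nonneg _) hδ.le
      _ < ε := by
        rw [div_mul_eq_mul_div, div_lt_iff₀ (by positivity)]
        nlinarith [norm_nonneg x, abs_nonneg R]
  have hsplit : ⟪ξ, x - y⟫ = (f x - f y) + ⟪ξ - ξ₀, x - y⟫ := by
    rw [inner_sub_left, hξ₀, map_sub]
    ring
  have hfy : f y < w := hfK y hyK
  have hxy_nonpos : ⟪ξ, x - y⟫ ≤ 0 := by rw [inner_sub_right]; linarith
  linarith [(abs_lt.mp hpert).1]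

theorem ae_exists_mem_inner_le_of_weak_tendsto [MeasurableSpace E] [OpensMeasurableSpace E]
    {α : Type*} [MeasurableSpace α] {μ : Measure α} [IsFiniteMeasure μ] {M : ℝ}
    {p : ℕ → α → E} {q : α → E} (hpmeas : ∀ j, Measurable (p j)) (hqmeas : Measurable q)
    (hpbd : ∀ j, ∀ᵐ x ∂μ, ‖p j x‖ ≤ M) (hqbd : ∀ᵐ x ∂μ, ‖q x‖ ≤ M)
    (hweak : ∀ φ : α → E, Integrable φ μ →
      Tendsto (fun j => ∫ x, ⟪φ x, p j x⟫ ∂μ) atTop (𝓝 (∫ x, ⟪φ x, q x⟫ ∂μ)))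
    {C : α → Set E} (hC : ∀ᵐ x ∂μ, IsCompact (C x) ∧ (C x).Nonempty)
    (hdist : ∀ᵐ x ∂μ, Tendsto (fun j => infDist (p j x) (C x)) atTop (𝓝 0)) (ξ : E) :
    ∀ᵐ x ∂μ, ∃ y ∈ C x, ⟪ξ, q x⟫ ≤ ⟪ξ, y⟫ := by
  have hmeas : ∀ {g : α → E}, Measurable g → Measurable fun x => ⟪ξ, g x⟫ := fun hg =>
    (continuous_const.inner continuous_id).measurable.comp hg
  have hint : ∀ {g : α → E}, Measurable g → (∀ᵐ x ∂μ, ‖g x‖ ≤ M) →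
      Integrable (fun x => ⟪ξ, g x⟫) μ := fun {g} hg hbd =>
    .of_bound (hmeas hg).aestronglyMeasurable (‖ξ‖ * M) <| hbd.mono fun x hx =>
      (norm_inner_le_norm ξ (g x)).trans (mul_le_mul_of_nonneg_left hx (norm_nonneg ξ))
  have hbelow := ae_le_of_eventually_le_of_tendsto_setIntegral (fun j => hmeas (hpmeas j))
    (fun j => hint (hpmeas j) (hpbd j)) (hint hqmeas hqbd)
    fun _ hA => tendsto_setIntegral_inner_of_weak_tendsto hweak ξ hA
  filter_upwards [hbelow, hC, hdist] with x hx ⟨hK, hne⟩ hpx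
  obtain ⟨y, hyK, hy⟩ := hK.exists_isMaxOn hne
    (continuous_const.inner continuous_id : Continuous fun z : E => ⟪ξ, z⟫).continuousOn
  refine ⟨y, hyK, le_of_forall_pos_le_add fun ε hε => hx _ ?_⟩
  exact eventually_inner_le_of_tendsto_infDist hK hne (fun z hz => hy hz) hpx hε

end InnerProduct

theorem weakstar_limits_preserve_pointwise_convex_constraints_general
    (d : ℕ)
    (a b : ℝ) (M : ℝ)
    (p : ℕ → ℝ → EuclideanSpace ℝ (Fin d)) (q : ℝ → EuclideanSpace ℝ (Fin d))
    (hpmeas : ∀ j, Measurable (p j)) (hqmeas : Measurable q)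
    (hpbd : ∀ j, ∀ᵐ τ ∂(volume.restrict (Set.Ioo a b)), ‖p j τ‖ ≤ M)
    (hqbd : ∀ᵐ τ ∂(volume.restrict (Set.Ioo a b)), ‖q τ‖ ≤ M)
    (hweak : ∀ φ : ℝ → EuclideanSpace ℝ (Fin d),
      Integrable φ (volume.restrict (Set.Ioo a b)) →
      Tendsto (fun j => ∫ τ in Set.Ioo a b, (inner ℝ (φ τ) (p j τ) : ℝ)) atTop
        (𝓝 (∫ τ in Set.Ioo a b, (inner ℝ (φ τ) (q τ) : ℝ))))
    (C : ℝ → Set (EuclideanSpace ℝ (Fin d)))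
    (hC : ∀ᵐ τ ∂(volume.restrict (Set.Ioo a b)),
      (C τ).Nonempty ∧ IsClosed (C τ) ∧ Convex ℝ (C τ) ∧ C τ ⊆ Metric.closedBall 0 M)
    (hdist : ∀ᵐ τ ∂(volume.restrict (Set.Ioo a b)),
      Tendsto (fun j => Metric.infDist (p j τ) (C τ)) atTop (𝓝 0)) :
    ∀ᵐ τ ∂(volume.restrict (Set.Ioo a b)), q τ ∈ C τ := by
  obtain ⟨D, hDc, hDd⟩ := TopologicalSpace.exists_countable_dense (EuclideanSpace ℝ (Fin d))
  have hcompact : ∀ᵐ τ ∂(volume.restrict (Set.Ioo a b)), IsCompact (C τ) ∧ (C τ).Nonempty :=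
    hC.mono fun τ ⟨hne, hcl, _, hsub⟩ =>
      ⟨(isCompact_closedBall 0 M).of_isClosed_subset hcl hsub, hne⟩
  have hsupport := (ae_ball_iff hDc).mpr fun ξ _ =>
    ae_exists_mem_inner_le_of_weak_tendsto hpmeas hqmeas hpbd hqbd hweak hcompact hdist ξ
  filter_upwards [hsupport, hC] with τ hτ ⟨_, hcl, hconv, hsub⟩
  exact mem_of_forall_mem_dense_exists_inner_le hconv hcl hsub hDd hτ

theorem weakstar_limits_preserve_pointwise_convex_constraints
    (d : ℕ) (hd : 1 ≤ d)
    (a b : ℝ) (hab : a < b) (M : ℝ) (hM : 0 < M)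
    (p : ℕ → ℝ → EuclideanSpace ℝ (Fin d)) (q : ℝ → EuclideanSpace ℝ (Fin d))
    (hpmeas : ∀ j, Measurable (p j)) (hqmeas : Measurable q)
    (hpbd : ∀ j, ∀ᵐ τ ∂(volume.restrict (Set.Ioo a b)), ‖p j τ‖ ≤ M)
    (hqbd : ∀ᵐ τ ∂(volume.restrict (Set.Ioo a b)), ‖q τ‖ ≤ M)
    (hweak : ∀ φ : ℝ → EuclideanSpace ℝ (Fin d),
      Integrable φ (volume.restrict (Set.Ioo a b)) →
      Tendsto (fun j => ∫ τ in Set.Ioo a b, (inner ℝ (φ τ) (p j τ) : ℝ)) atTop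
        (𝓝 (∫ τ in Set.Ioo a b, (inner ℝ (φ τ) (q τ) : ℝ))))
    (C : ℝ → Set (EuclideanSpace ℝ (Fin d)))
    (hC : ∀ᵐ τ ∂(volume.restrict (Set.Ioo a b)),
      (C τ).Nonempty ∧ IsClosed (C τ) ∧ Convex ℝ (C τ) ∧ C τ ⊆ Metric.closedBall 0 M)
    (hCmeas : ∀ ξ : EuclideanSpace ℝ (Fin d),
      Measurable (fun τ => ⨆ q' ∈ C τ, (inner ℝ ξ q' : ℝ)))
    (hdist : ∀ᵐ τ ∂(volume.restrict (Set.Ioo a b)),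
      Tendsto (fun j => Metric.infDist (p j τ) (C τ)) atTop (𝓝 0)) :
    ∀ᵐ τ ∂(volume.restrict (Set.Ioo a b)), q τ ∈ C τ :=
  weakstar_limits_preserve_pointwise_convex_constraints_general d a b M p q hpmeas hqmeas hpbd hqbd
    hweak C hC hdist
end

section
/- Let A₁, A₂ ⊆ E be nonempty compact sets and let 0 ≤ λ ≤ 1. Then for every x ∈ E, the Clarke subdifferential of Φ_λ at x satisfies ∂^C Φ_λ(x) = convexHull ℝ {2λ(x − a₁) + 2(1−λ)(x − a₂) : a₁ ∈ Π_{A₁}(x), a₂ ∈ Π_{A₂}(x)}. -/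
open MeasureTheory Metric Filter Topology

/-- The geometric distance potential `Φ_λ(x) = λ d_{A₁}(x)² + (1-λ) d_{A₂}(x)²`. -/
noncomputable def distPotential {d : ℕ} (A₁ A₂ : Set (EuclideanSpace ℝ (Fin d))) (lam : ℝ)
    (x : EuclideanSpace ℝ (Fin d)) : ℝ :=
  lam * (Metric.infDist x A₁) ^ 2 + (1 - lam) * (Metric.infDist x A₂) ^ 2

/-- The Clarke subdifferential of `f : E → ℝ` at `x`: the convex hull of all limits of
gradients of `f` along sequences of differentiability points converging to `x`. -/
def clarkeSubdiff {d : ℕ} (f : EuclideanSpace ℝ (Fin d) → ℝ)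
    (x : EuclideanSpace ℝ (Fin d)) : Set (EuclideanSpace ℝ (Fin d)) :=
  convexHull ℝ
    {v | ∃ u : ℕ → EuclideanSpace ℝ (Fin d),
      Filter.Tendsto u Filter.atTop (nhds x) ∧
      (∀ k, DifferentiableAt ℝ f (u k)) ∧
      Filter.Tendsto (fun k => gradient f (u k)) Filter.atTop (nhds v)}

/-!
At a differentiability point `z`, `Φ_λ` is touched from above by the potential of the singletons
of any nearest points `a₁, a₂` of `z`, so its gradient there is `2λ(z - a₁) + 2(1-λ)(z - a₂)`; by
compactness every limiting gradient at `x` then has this form with `aᵢ ∈ Π_{Aᵢ}(x)`.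

Conversely, by Hahn–Banach it suffices that for every direction `w` some limiting gradient maximises
`⟪w, ·⟫` over these vectors. Approach `x` through differentiability points `z ≈ x - t w` (dense by
Rademacher's theorem): monotonicity of the nearest-point map, `0 ≤ ⟪z - x, p - b⟫`, forces the
limits of nearest points of `z` to minimise `⟪w, ·⟫` over `Π_{Aᵢ}(x)`.
-/

open scoped RealInnerProductSpace
open Set

theorem isCompact_convexHull {V : Type*} [NormedAddCommGroup V] [NormedSpace ℝ V]
    [FiniteDimensional ℝ V] {s : Set V} (hs : IsCompact s) : IsCompact (convexHull ℝ s) := by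
  classical
  rcases s.eq_empty_or_nonempty with rfl | ⟨s₀, hs₀⟩
  · simp
  set n := Module.finrank ℝ V + 1
  suffices h : convexHull ℝ s = (fun p : (Fin n → ℝ) × (Fin n → V) => ∑ i, p.1 i • p.2 i) ''
      (stdSimplex ℝ (Fin n) ×ˢ univ.pi fun _ => s) by
    rw [h]
    exact ((isCompact_stdSimplex ℝ (Fin n)).prod (isCompact_univ_pi fun _ => hs)).image
      (by fun_prop)
  refine Subset.antisymm (fun y hy => ?_) ?_
  · -- Carathéodory: `y` is a convex combination of at most `n` points of `s`; pad with zeros.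
    obtain ⟨ι, _, z, w, hzs, hind, hw, hw1, rfl⟩ := eq_pos_convex_span_of_mem_convexHull hy
    have hcard : Fintype.card ι ≤ Fintype.card (Fin n) := by
      simpa [n] using hind.card_le_finrank_succ.trans
        (Nat.succ_le_succ (Submodule.finrank_le _))
    obtain ⟨e⟩ := Function.Embedding.nonempty_of_card_le hcard
    refine ⟨(Function.extend e w 0, Function.extend e z fun _ => s₀), ⟨⟨fun j => ?_, ?_⟩, ?_⟩, ?_⟩
    · rcases em (∃ i, e i = j) with ⟨i, rfl⟩ | hj
      · simpa [e.injective.extend_apply] using (hw i).le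
      · simp [Function.extend_apply' _ _ _ hj]
    · exact (Fintype.sum_of_injective e e.injective w _
        (fun j hj => Function.extend_apply' (f := e) w 0 j hj)
        (fun i => (e.injective.extend_apply _ _ _).symm)).symm.trans hw1
    · intro j _
      rcases em (∃ i, e i = j) with ⟨i, rfl⟩ | hj
      · simpa [e.injective.extend_apply] using hzs (mem_range_self i)
      · simpa [Function.extend_apply' _ _ _ hj] using hs₀
    · refine (Fintype.sum_of_injective e e.injective (fun i => w i • z i) _ (fun j hj => ?_)
        (fun i => by simp [e.injective.extend_apply])).symm
      simp [Function.extend_apply' (f := e) w 0 j hj]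
  · rintro _ ⟨⟨w, z⟩, ⟨hw, hz⟩, rfl⟩
    exact mem_convexHull_of_exists_fintype w z hw.1 hw.2 (fun i => hz i (mem_univ i)) rfl

section InnerProductSpace

variable {F : Type*} [NormedAddCommGroup F] [InnerProductSpace ℝ F] [CompleteSpace F]

def limitingGradients (f : F → ℝ) (x : F) : Set F :=
  {v | ∃ u : ℕ → F, Tendsto u atTop (𝓝 x) ∧ (∀ k, DifferentiableAt ℝ f (u k)) ∧
    Tendsto (fun k => gradient f (u k)) atTop (𝓝 v)}

theorem isClosed_limitingGradients (f : F → ℝ) (x : F) : IsClosed (limitingGradients f x) := by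
  refine IsSeqClosed.isClosed fun v l hv hvl => ?_
  have hε : Tendsto (fun n : ℕ => 1 / ((n : ℝ) + 1)) atTop (𝓝 0) :=
    tendsto_one_div_add_atTop_nhds_zero_nat
  have hdiag (n : ℕ) : ∃ z, dist x z < 1 / (n + 1) ∧ DifferentiableAt ℝ f z ∧
      dist (v n) (gradient f z) < 1 / (n + 1) := by
    obtain ⟨u, hu, hud, hug⟩ := hv n
    have hpos : (0 : ℝ) < 1 / (n + 1) := by positivity
    obtain ⟨k, hk⟩ := ((hu.eventually (ball_mem_nhds x hpos)).and
      (hug.eventually (ball_mem_nhds _ hpos))).exists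
    exact ⟨u k, mem_ball'.mp hk.1, hud k, mem_ball'.mp hk.2⟩
  choose z hzx hzd hzv using hdiag
  exact ⟨z, tendsto_const_nhds.congr_dist (squeeze_zero (fun _ => dist_nonneg)
      (fun n => (hzx n).le) hε), hzd,
    hvl.congr_dist (squeeze_zero (fun _ => dist_nonneg) (fun n => (hzv n).le) hε)⟩

theorem DifferentiableAt.gradient_eq_of_le {f g : F → ℝ} {g' z : F}
    (hf : DifferentiableAt ℝ f z) (hg : HasGradientAt g g' z) (hle : ∀ᶠ y in 𝓝 z, f y ≤ g y)
    (heq : f z = g z) : gradient f z = g' := by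
  have hmax : IsLocalMax (fun y => f y - g y) z := hle.mono fun y hy => by
    simp only [heq, sub_self]; linarith
  have h := hmax.hasFDerivAt_eq_zero (hf.hasFDerivAt.sub (hasGradientAt_iff_hasFDerivAt.mp hg))
  rw [gradient, sub_eq_zero.mp h, LinearIsometryEquiv.symm_apply_apply]

theorem subset_of_forall_exists_inner_le {K T : Set F} (hK : Convex ℝ K) (hKc : IsClosed K)
    (h : ∀ w, ∃ s ∈ K, ∀ t ∈ T, ⟪w, t⟫ ≤ ⟪w, s⟫) : T ⊆ K := by
  intro v hv
  by_contra hvK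
  obtain ⟨g, c, hgK, hgv⟩ := geometric_hahn_banach_closed_point hK hKc hvK
  obtain ⟨s, hs, hsup⟩ := h ((InnerProductSpace.toDual ℝ F).symm g)
  have := hsup v hv
  simp only [InnerProductSpace.toDual_symm_apply] at this
  linarith [hgK s hs]

end InnerProductSpace

section DistPotential

variable {d : ℕ}

local notation "E" => EuclideanSpace ℝ (Fin d)

theorem clarkeSubdiff_eq_convexHull_limitingGradients (f : E → ℝ) (x : E) :
    clarkeSubdiff f x = convexHull ℝ (limitingGradients f x) :=
  rfl

theorem nearestPts_nonempty {A : Set E} (hA : IsCompact A) (hne : A.Nonempty) (x : E) :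
    (nearestPts A x).Nonempty := by
  obtain ⟨a, ha, hax⟩ := hA.exists_infDist_eq_dist hne x
  exact ⟨a, ha, by rw [← dist_eq_norm, hax]⟩

theorem isCompact_nearestPts {A : Set E} (hA : IsCompact A) (x : E) :
    IsCompact (nearestPts A x) :=
  hA.of_isClosed_subset (hA.isClosed.inter (isClosed_eq (by fun_prop) continuous_const))
    fun _ ha => ha.1

theorem mem_nearestPts_of_tendsto {A : Set E} (hA : IsClosed A) {u p : ℕ → E} {x q : E}
    (hu : Tendsto u atTop (𝓝 x)) (hp : ∀ k, p k ∈ nearestPts A (u k))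
    (hq : Tendsto p atTop (𝓝 q)) : q ∈ nearestPts A x :=
  ⟨hA.mem_of_tendsto hq (Eventually.of_forall fun k => (hp k).1),
    tendsto_nhds_unique ((hu.sub hq).norm.congr fun k => (hp k).2)
      ((continuous_infDist_pt A).continuousAt.tendsto.comp hu)⟩

/-- Monotonicity of the (multivalued) nearest-point map. -/
theorem inner_sub_nonneg_of_mem_nearestPts {A : Set E} {x z p b : E}
    (hp : p ∈ nearestPts A z) (hb : b ∈ nearestPts A x) : 0 ≤ ⟪z - x, p - b⟫ := by
  have hz : ‖z - p‖ ≤ ‖z - b‖ := by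
    rw [hp.2, ← dist_eq_norm]; exact infDist_le_dist_of_mem hb.1
  have hx : ‖x - b‖ ≤ ‖x - p‖ := by
    rw [hb.2, ← dist_eq_norm]; exact infDist_le_dist_of_mem hp.1
  have hid : 2 * ⟪z - x, p - b⟫ = ‖z - b‖ ^ 2 - ‖z - p‖ ^ 2 + (‖x - p‖ ^ 2 - ‖x - b‖ ^ 2) := by
    simp only [norm_sub_sq_real, inner_sub_left, inner_sub_right]
    ring
  nlinarith [norm_nonneg (z - p), norm_nonneg (x - b)]

def potentialGrad (lam : ℝ) (x a₁ a₂ : E) : E :=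
  (2 * lam) • (x - a₁) + (2 * (1 - lam)) • (x - a₂)

theorem hasGradientAt_distPotential_singleton (lam : ℝ) (x a₁ a₂ : E) :
    HasGradientAt (distPotential {a₁} {a₂} lam) (potentialGrad lam x a₁ a₂) x := by
  have h (a : E) : HasFDerivAt (fun y : E => ‖y - a‖ ^ 2) (2 • innerSL ℝ (x - a)) x := by
    simpa using ((hasFDerivAt_id x).sub_const a).norm_sq
  have hΦ : distPotential {a₁} {a₂} lam =
      fun y => lam * ‖y - a₁‖ ^ 2 + (1 - lam) * ‖y - a₂‖ ^ 2 := by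
    funext y
    simp [distPotential, infDist_singleton, dist_eq_norm]
  have hV : InnerProductSpace.toDual ℝ E (potentialGrad lam x a₁ a₂) =
      lam • 2 • innerSL ℝ (x - a₁) + (1 - lam) • 2 • innerSL ℝ (x - a₂) := by
    ext v
    simp only [potentialGrad, map_add, map_smul, map_sub, add_apply,
      smul_apply, sub_apply,
      InnerProductSpace.toDual_apply_apply, smul_eq_mul, coe_innerSL_apply, nsmul_eq_mul]
    ring
  rw [hasGradientAt_iff_hasFDerivAt, hΦ, hV]
  exact ((h a₁).const_mul lam).add ((h a₂).const_mul (1 - lam))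

theorem distPotential_le_singleton {A₁ A₂ : Set E} {lam : ℝ} (hlam₀ : 0 ≤ lam) (hlam₁ : lam ≤ 1)
    {a₁ a₂ : E} (ha₁ : a₁ ∈ A₁) (ha₂ : a₂ ∈ A₂) (y : E) :
    distPotential A₁ A₂ lam y ≤ distPotential {a₁} {a₂} lam y := by
  have h₁ : infDist y A₁ ≤ infDist y {a₁} :=
    infDist_le_infDist_of_subset (singleton_subset_iff.mpr ha₁) (singleton_nonempty _)
  have h₂ : infDist y A₂ ≤ infDist y {a₂} :=
    infDist_le_infDist_of_subset (singleton_subset_iff.mpr ha₂) (singleton_nonempty _)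
  have hlam : 0 ≤ 1 - lam := by linarith
  unfold distPotential
  gcongr <;> exact infDist_nonneg

theorem distPotential_eq_singleton {A₁ A₂ : Set E} {lam : ℝ} {z a₁ a₂ : E}
    (ha₁ : a₁ ∈ nearestPts A₁ z) (ha₂ : a₂ ∈ nearestPts A₂ z) :
    distPotential A₁ A₂ lam z = distPotential {a₁} {a₂} lam z := by
  simp only [distPotential, infDist_singleton, dist_eq_norm, ha₁.2, ha₂.2]

theorem gradient_distPotential {A₁ A₂ : Set E} {lam : ℝ} (hlam₀ : 0 ≤ lam) (hlam₁ : lam ≤ 1)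
    {z a₁ a₂ : E} (ha₁ : a₁ ∈ nearestPts A₁ z) (ha₂ : a₂ ∈ nearestPts A₂ z)
    (hdiff : DifferentiableAt ℝ (distPotential A₁ A₂ lam) z) :
    gradient (distPotential A₁ A₂ lam) z = potentialGrad lam z a₁ a₂ :=
  hdiff.gradient_eq_of_le (hasGradientAt_distPotential_singleton lam z a₁ a₂)
    (Eventually.of_forall (distPotential_le_singleton hlam₀ hlam₁ ha₁.1 ha₂.1))
    (distPotential_eq_singleton ha₁ ha₂)

theorem dense_differentiableAt_distPotential (A₁ A₂ : Set E) (lam : ℝ) :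
    Dense {z | DifferentiableAt ℝ (distPotential A₁ A₂ lam) z} := by
  refine (Measure.dense_of_ae (μ := (volume : Measure E))
    ((lipschitz_infDist_pt A₁).ae_differentiableAt.and
      (lipschitz_infDist_pt A₂).ae_differentiableAt)).mono fun z hz => ?_
  exact ((hz.1.pow 2).const_mul lam).add ((hz.2.pow 2).const_mul (1 - lam))

theorem exists_subseq_tendsto_gradient_distPotential {A₁ A₂ : Set E} (hA₁ : IsCompact A₁)
    (hA₂ : IsCompact A₂) {lam : ℝ} (hlam₀ : 0 ≤ lam) (hlam₁ : lam ≤ 1) {x : E} {u p₁ p₂ : ℕ → E}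
    (hu : Tendsto u atTop (𝓝 x)) (hdiff : ∀ k, DifferentiableAt ℝ (distPotential A₁ A₂ lam) (u k))
    (hp₁ : ∀ k, p₁ k ∈ nearestPts A₁ (u k)) (hp₂ : ∀ k, p₂ k ∈ nearestPts A₂ (u k)) :
    ∃ q₁ ∈ nearestPts A₁ x, ∃ q₂ ∈ nearestPts A₂ x, ∃ σ : ℕ → ℕ, StrictMono σ ∧
      Tendsto (p₁ ∘ σ) atTop (𝓝 q₁) ∧ Tendsto (p₂ ∘ σ) atTop (𝓝 q₂) ∧
      Tendsto (fun k => gradient (distPotential A₁ A₂ lam) (u (σ k))) atTop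
        (𝓝 (potentialGrad lam x q₁ q₂)) := by
  obtain ⟨⟨q₁, q₂⟩, -, σ, hσ, hq⟩ := (hA₁.prod hA₂).tendsto_subseq
    (x := fun k => (p₁ k, p₂ k)) fun k => ⟨(hp₁ k).1, (hp₂ k).1⟩
  have huσ := hu.comp hσ.tendsto_atTop
  have hq₁ : Tendsto (p₁ ∘ σ) atTop (𝓝 q₁) := (continuous_fst.tendsto _).comp hq
  have hq₂ : Tendsto (p₂ ∘ σ) atTop (𝓝 q₂) := (continuous_snd.tendsto _).comp hq
  refine ⟨q₁, mem_nearestPts_of_tendsto hA₁.isClosed huσ (fun k => hp₁ (σ k)) hq₁,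
    q₂, mem_nearestPts_of_tendsto hA₂.isClosed huσ (fun k => hp₂ (σ k)) hq₂, σ, hσ, hq₁, hq₂, ?_⟩
  simp only [gradient_distPotential hlam₀ hlam₁ (hp₁ _) (hp₂ _) (hdiff _)]
  exact ((huσ.sub hq₁).const_smul _).add ((huσ.sub hq₂).const_smul _)

theorem limitingGradients_distPotential_subset {A₁ A₂ : Set E} (hA₁ : A₁.Nonempty)
    (hA₂ : A₂.Nonempty) (hA₁c : IsCompact A₁) (hA₂c : IsCompact A₂) {lam : ℝ} (hlam₀ : 0 ≤ lam)
    (hlam₁ : lam ≤ 1) (x : E) :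
    limitingGradients (distPotential A₁ A₂ lam) x ⊆
      image2 (potentialGrad lam x) (nearestPts A₁ x) (nearestPts A₂ x) := by
  rintro v ⟨u, hu, hdiff, hv⟩
  choose p₁ hp₁ using fun k => nearestPts_nonempty hA₁c hA₁ (u k)
  choose p₂ hp₂ using fun k => nearestPts_nonempty hA₂c hA₂ (u k)
  obtain ⟨q₁, hq₁, q₂, hq₂, σ, hσ, -, -, hlim⟩ :=
    exists_subseq_tendsto_gradient_distPotential hA₁c hA₂c hlam₀ hlam₁ hu hdiff hp₁ hp₂
  rw [tendsto_nhds_unique (hv.comp hσ.tendsto_atTop) hlim]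
  exact mem_image2_of_mem hq₁ hq₂

theorem inner_le_of_tendsto_nearestPts {A : Set E} {x w b q : E} {t : ℕ → ℝ} {z p : ℕ → E}
    (ht : ∀ n, 0 < t n) (ht0 : Tendsto t atTop (𝓝 0)) (hz : ∀ n, ‖z n - (x - t n • w)‖ ≤ t n ^ 2)
    (hp : ∀ n, p n ∈ nearestPts A (z n)) (hq : Tendsto p atTop (𝓝 q))
    (hb : b ∈ nearestPts A x) : ⟪w, q⟫ ≤ ⟪w, b⟫ := by
  have hbound (n : ℕ) : ⟪w, p n - b⟫ ≤ t n * ‖p n - b‖ := by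
    have hmono := inner_sub_nonneg_of_mem_nearestPts (hp n) hb
    have hsplit : z n - x = (z n - (x - t n • w)) - t n • w := by abel
    rw [hsplit, inner_sub_left, real_inner_smul_left] at hmono
    have herr := (real_inner_le_norm (z n - (x - t n • w)) (p n - b)).trans
      (mul_le_mul_of_nonneg_right (hz n) (norm_nonneg _))
    nlinarith [ht n]
  have hlim : ⟪w, q - b⟫ ≤ 0 * ‖q - b‖ :=
    le_of_tendsto_of_tendsto' (tendsto_const_nhds.inner (hq.sub tendsto_const_nhds))
      (ht0.mul (hq.sub tendsto_const_nhds).norm) hbound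
  rw [inner_sub_right, zero_mul] at hlim
  linarith

theorem exists_forall_inner_le_mem_limitingGradients {A₁ A₂ : Set E} (hA₁ : A₁.Nonempty)
    (hA₂ : A₂.Nonempty) (hA₁c : IsCompact A₁) (hA₂c : IsCompact A₂) {lam : ℝ} (hlam₀ : 0 ≤ lam)
    (hlam₁ : lam ≤ 1) (x w : E) :
    ∃ q₁ ∈ nearestPts A₁ x, ∃ q₂ ∈ nearestPts A₂ x,
      (∀ b ∈ nearestPts A₁ x, ⟪w, q₁⟫ ≤ ⟪w, b⟫) ∧ (∀ b ∈ nearestPts A₂ x, ⟪w, q₂⟫ ≤ ⟪w, b⟫) ∧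
      potentialGrad lam x q₁ q₂ ∈ limitingGradients (distPotential A₁ A₂ lam) x := by
  set t : ℕ → ℝ := fun n => 1 / (n + 1)
  have ht (n : ℕ) : 0 < t n := by positivity
  have ht0 : Tendsto t atTop (𝓝 0) := tendsto_one_div_add_atTop_nhds_zero_nat
  have happrox (n : ℕ) : ∃ z, dist (x - t n • w) z < t n ^ 2 ∧
      DifferentiableAt ℝ (distPotential A₁ A₂ lam) z :=
    ((dense_differentiableAt_distPotential A₁ A₂ lam).exists_dist_lt _ (by positivity)).imp
      fun _ h => ⟨h.2, h.1⟩
  choose z hz hdiff using happrox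
  have hzx : Tendsto z atTop (𝓝 x) := by
    refine Tendsto.congr_dist ?_ (squeeze_zero (fun _ => dist_nonneg) (fun n => (hz n).le)
      (by simpa using ht0.pow 2))
    simpa using tendsto_const_nhds.sub (ht0.smul_const w)
  choose p₁ hp₁ using fun k => nearestPts_nonempty hA₁c hA₁ (z k)
  choose p₂ hp₂ using fun k => nearestPts_nonempty hA₂c hA₂ (z k)
  obtain ⟨q₁, hq₁, q₂, hq₂, σ, hσ, hlim₁, hlim₂, hgrad⟩ :=
    exists_subseq_tendsto_gradient_distPotential hA₁c hA₂c hlam₀ hlam₁ hzx hdiff hp₁ hp₂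
  have htσ : Tendsto (t ∘ σ) atTop (𝓝 0) := ht0.comp hσ.tendsto_atTop
  have hzσ (k : ℕ) : ‖z (σ k) - (x - t (σ k) • w)‖ ≤ t (σ k) ^ 2 := by
    rw [← dist_eq_norm, dist_comm]; exact (hz (σ k)).le
  exact ⟨q₁, hq₁, q₂, hq₂,
    fun b hb => inner_le_of_tendsto_nearestPts (fun k => ht (σ k)) htσ hzσ (fun k => hp₁ (σ k))
      hlim₁ hb,
    fun b hb => inner_le_of_tendsto_nearestPts (fun k => ht (σ k)) htσ hzσ (fun k => hp₂ (σ k))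
      hlim₂ hb,
    z ∘ σ, hzx.comp hσ.tendsto_atTop, fun k => hdiff (σ k), hgrad⟩

theorem inner_potentialGrad_le {lam : ℝ} (hlam₀ : 0 ≤ lam) (hlam₁ : lam ≤ 1) {w x a₁ a₂ b₁ b₂ : E}
    (h₁ : ⟪w, b₁⟫ ≤ ⟪w, a₁⟫) (h₂ : ⟪w, b₂⟫ ≤ ⟪w, a₂⟫) :
    ⟪w, potentialGrad lam x a₁ a₂⟫ ≤ ⟪w, potentialGrad lam x b₁ b₂⟫ := by
  simp only [potentialGrad, inner_add_right, real_inner_smul_right, inner_sub_right]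
  nlinarith

theorem isCompact_image2_potentialGrad {A₁ A₂ : Set E} (hA₁ : IsCompact A₁) (hA₂ : IsCompact A₂)
    (lam : ℝ) (x : E) :
    IsCompact (image2 (potentialGrad lam x) (nearestPts A₁ x) (nearestPts A₂ x)) := by
  rw [← image_prod]
  exact ((isCompact_nearestPts hA₁ x).prod (isCompact_nearestPts hA₂ x)).image
    (by unfold potentialGrad; fun_prop)

end DistPotential

theorem clarke_subdiff_distPotential_moe_general
    (d : ℕ)
    (A₁ A₂ : Set (EuclideanSpace ℝ (Fin d)))
    (hA₁ : A₁.Nonempty) (hA₂ : A₂.Nonempty)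
    (hA₁cpt : IsCompact A₁) (hA₂cpt : IsCompact A₂)
    (lam : ℝ) (hlam₀ : 0 ≤ lam) (hlam₁ : lam ≤ 1) :
    ∀ x : EuclideanSpace ℝ (Fin d),
      clarkeSubdiff (distPotential A₁ A₂ lam) x =
        convexHull ℝ
          (Set.image2 (fun a₁ a₂ => (2 * lam) • (x - a₁) + (2 * (1 - lam)) • (x - a₂))
            (nearestPts A₁ x) (nearestPts A₂ x)) := by
  intro x
  set S := limitingGradients (distPotential A₁ A₂ lam) x
  have hST : S ⊆ image2 (potentialGrad lam x) (nearestPts A₁ x) (nearestPts A₂ x) :=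
    limitingGradients_distPotential_subset hA₁ hA₂ hA₁cpt hA₂cpt hlam₀ hlam₁ x
  have hS : IsCompact S := (isCompact_image2_potentialGrad hA₁cpt hA₂cpt lam x).of_isClosed_subset
    (isClosed_limitingGradients _ x) hST
  rw [clarkeSubdiff_eq_convexHull_limitingGradients]
  refine (convexHull_mono hST).antisymm (convexHull_min ?_ (convex_convexHull ℝ S))
  refine subset_of_forall_exists_inner_le (convex_convexHull ℝ S)
    (isCompact_convexHull hS).isClosed fun w => ?_
  obtain ⟨q₁, hq₁, q₂, hq₂, hmin₁, hmin₂, hq⟩ :=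
    exists_forall_inner_le_mem_limitingGradients hA₁ hA₂ hA₁cpt hA₂cpt hlam₀ hlam₁ x w
  refine ⟨_, subset_convexHull ℝ S hq, ?_⟩
  rintro _ ⟨a₁, ha₁, a₂, ha₂, rfl⟩
  exact inner_potentialGrad_le hlam₀ hlam₁ (hmin₁ a₁ ha₁) (hmin₂ a₂ ha₂)

theorem clarke_subdiff_distPotential_moe
    (d : ℕ) (hd : 1 ≤ d)
    (A₁ A₂ : Set (EuclideanSpace ℝ (Fin d)))
    (hA₁ : A₁.Nonempty) (hA₂ : A₂.Nonempty)
    (hA₁cpt : IsCompact A₁) (hA₂cpt : IsCompact A₂)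
    (lam : ℝ) (hlam₀ : 0 ≤ lam) (hlam₁ : lam ≤ 1) :
    ∀ x : EuclideanSpace ℝ (Fin d),
      clarkeSubdiff (distPotential A₁ A₂ lam) x =
        convexHull ℝ
          (Set.image2 (fun a₁ a₂ => (2 * lam) • (x - a₁) + (2 * (1 - lam)) • (x - a₂))
            (nearestPts A₁ x) (nearestPts A₂ x)) :=
  clarke_subdiff_distPotential_moe_general d A₁ A₂ hA₁ hA₂ hA₁cpt hA₂cpt lam hlam₀ hlam₁
end

section
/- Let A₁, A₂ ⊆ E be nonempty finite sets, let 0 ≤ λ ≤ 1, and let x* ∈ E be a local minimizer of Φ_λ. Then there exists an open neighborhood U of x* such that Φ_λ(x) = Φ_λ(x*) + ‖x − x*‖² for all x ∈ U. In particular, x* is an isolated strict local minimizer of Φ_λ. -/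
/-!
For nearest points `a₁ ∈ Π_{A₁}(x*)`, `a₂ ∈ Π_{A₂}(x*)` the quadratic
`q(x) = λ‖x - a₁‖² + (1-λ)‖x - a₂‖²` lies above `Φ_λ` and touches it at `x*`, so it also has a
local minimum at `x*`. Since `q(x) = ‖x - c‖² + const` with `c = λa₁ + (1-λ)a₂`, and a local
minimum of the convex function `‖· - c‖` is global, `x* = c` and `q(x) = Φ_λ(x*) + ‖x - x*‖²`.
Because `A₁, A₂` are finite, points near `x*` have their nearest points among those of `x*`, so
near `x*` the potential `Φ_λ` coincides with one of these quadratics at every point.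
-/

open MeasureTheory Metric Filter Topology

theorem Set.Finite.eventually_exists_infDist_eq {α : Type*} [MetricSpace α] {A : Set α}
    (hA : A.Finite) (hne : A.Nonempty) (x : α) :
    ∀ᶠ y in 𝓝 x, ∃ a ∈ A, infDist x A = dist x a ∧ infDist y A = dist y a := by
  have hfar : ∀ᶠ y in 𝓝 x, ∀ a ∈ {a ∈ A | infDist x A < dist x a}, infDist y A < dist y a :=
    (hA.subset (Set.sep_subset _ _)).eventually_all.2 fun a ha =>
      (continuous_infDist_pt A).continuousAt.eventually_lt
        (continuous_id.dist continuous_const).continuousAt ha.2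
  filter_upwards [hfar] with y hy
  obtain ⟨a, ha, hya⟩ := hA.isCompact.exists_infDist_eq_dist hne y
  exact ⟨a, ha, (infDist_le_dist_of_mem ha).antisymm
    (not_lt.1 fun hlt => (hy a ⟨ha, hlt⟩).ne hya), hya⟩

theorem eq_of_isLocalMin_dist {E : Type*} [NormedAddCommGroup E] [NormedSpace ℝ E] {x c : E}
    (h : IsLocalMin (fun y => dist y c) x) : x = c :=
  dist_le_zero.1 <| by
    simpa using IsMinOn.of_isLocalMin_of_convex_univ h (convexOn_univ_dist c) c

theorem weighted_norm_sub_sq_eq_norm_sub_barycenter_sq {F : Type*} [NormedAddCommGroup F]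
    [InnerProductSpace ℝ F] (lam : ℝ) (a₁ a₂ x : F) :
    lam * ‖x - a₁‖ ^ 2 + (1 - lam) * ‖x - a₂‖ ^ 2 =
      ‖x - (lam • a₁ + (1 - lam) • a₂)‖ ^ 2 + lam * (1 - lam) * ‖a₁ - a₂‖ ^ 2 := by
  simp only [← real_inner_self_eq_norm_sq, inner_sub_left, inner_sub_right, inner_add_left,
    inner_add_right, real_inner_smul_left, real_inner_smul_right, real_inner_comm x]
  ring

section DistPotential

variable {d : ℕ} {A₁ A₂ : Set (EuclideanSpace ℝ (Fin d))} {lam : ℝ}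
  {x a₁ a₂ : EuclideanSpace ℝ (Fin d)}

theorem distPotential_le (hlam₀ : 0 ≤ lam) (hlam₁ : lam ≤ 1) (ha₁ : a₁ ∈ A₁) (ha₂ : a₂ ∈ A₂) :
    distPotential A₁ A₂ lam x ≤ lam * ‖x - a₁‖ ^ 2 + (1 - lam) * ‖x - a₂‖ ^ 2 := by
  rw [distPotential, ← dist_eq_norm, ← dist_eq_norm]
  exact add_le_add
    (mul_le_mul_of_nonneg_left (pow_le_pow_left₀ infDist_nonneg (infDist_le_dist_of_mem ha₁) 2)
      hlam₀)
    (mul_le_mul_of_nonneg_left (pow_le_pow_left₀ infDist_nonneg (infDist_le_dist_of_mem ha₂) 2)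
      (sub_nonneg.2 hlam₁))

theorem distPotential_eq (h₁ : infDist x A₁ = dist x a₁) (h₂ : infDist x A₂ = dist x a₂) :
    distPotential A₁ A₂ lam x = lam * ‖x - a₁‖ ^ 2 + (1 - lam) * ‖x - a₂‖ ^ 2 := by
  rw [distPotential, h₁, h₂, dist_eq_norm, dist_eq_norm]

theorem IsLocalMin.distPotential_nearest_quadratic_eq (hlam₀ : 0 ≤ lam) (hlam₁ : lam ≤ 1)
    (hmin : IsLocalMin (distPotential A₁ A₂ lam) x) (ha₁ : a₁ ∈ A₁) (ha₂ : a₂ ∈ A₂)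
    (h₁ : infDist x A₁ = dist x a₁) (h₂ : infDist x A₂ = dist x a₂)
    (y : EuclideanSpace ℝ (Fin d)) :
    lam * ‖y - a₁‖ ^ 2 + (1 - lam) * ‖y - a₂‖ ^ 2 = distPotential A₁ A₂ lam x + ‖y - x‖ ^ 2 := by
  have hq := weighted_norm_sub_sq_eq_norm_sub_barycenter_sq lam a₁ a₂
  have hx : x = lam • a₁ + (1 - lam) • a₂ := eq_of_isLocalMin_dist <| hmin.mono fun z hz => by
    have hz' := hz.trans (distPotential_le hlam₀ hlam₁ ha₁ ha₂)
    rw [distPotential_eq h₁ h₂, hq, hq] at hz'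
    simp only [dist_eq_norm]
    exact pow_le_pow_iff_left₀ (norm_nonneg _) (norm_nonneg _) two_ne_zero |>.1 (by linarith)
  rw [distPotential_eq h₁ h₂, hq, hq, ← hx, sub_self, norm_zero]
  ring

end DistPotential

theorem local_minimizers_quadratic_rigidity_moe_general
    (d : ℕ)
    (A₁ A₂ : Set (EuclideanSpace ℝ (Fin d)))
    (hA₁ : A₁.Nonempty) (hA₂ : A₂.Nonempty)
    (hA₁fin : A₁.Finite) (hA₂fin : A₂.Finite)
    (lam : ℝ) (hlam₀ : 0 ≤ lam) (hlam₁ : lam ≤ 1)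
    (xstar : EuclideanSpace ℝ (Fin d))
    (hmin : IsLocalMin (distPotential A₁ A₂ lam) xstar) :
    ∃ U : Set (EuclideanSpace ℝ (Fin d)), IsOpen U ∧ xstar ∈ U ∧
      (∀ x ∈ U, distPotential A₁ A₂ lam x =
        distPotential A₁ A₂ lam xstar + ‖x - xstar‖ ^ 2) ∧
      (∀ x ∈ U, x ≠ xstar →
        distPotential A₁ A₂ lam xstar < distPotential A₁ A₂ lam x) := by
  obtain ⟨U, hU, hUo, hxU⟩ := _root_.eventually_nhds_iff.1 <|
    (hA₁fin.eventually_exists_infDist_eq hA₁ xstar).and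
      (hA₂fin.eventually_exists_infDist_eq hA₂ xstar)
  have hquad : ∀ x ∈ U, distPotential A₁ A₂ lam x =
      distPotential A₁ A₂ lam xstar + ‖x - xstar‖ ^ 2 := by
    intro x hx
    obtain ⟨⟨a₁, ha₁, h₁, hx₁⟩, ⟨a₂, ha₂, h₂, hx₂⟩⟩ := hU x hx
    rw [distPotential_eq hx₁ hx₂]
    exact hmin.distPotential_nearest_quadratic_eq hlam₀ hlam₁ ha₁ ha₂ h₁ h₂ x
  refine ⟨U, hUo, hxU, hquad, fun x hx hne => ?_⟩
  rw [hquad x hx, lt_add_iff_pos_right]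
  exact pow_pos (norm_pos_iff.2 (sub_ne_zero.2 hne)) 2

theorem local_minimizers_quadratic_rigidity_moe
    (d : ℕ) (hd : 1 ≤ d)
    (A₁ A₂ : Set (EuclideanSpace ℝ (Fin d)))
    (hA₁ : A₁.Nonempty) (hA₂ : A₂.Nonempty)
    (hA₁fin : A₁.Finite) (hA₂fin : A₂.Finite)
    (lam : ℝ) (hlam₀ : 0 ≤ lam) (hlam₁ : lam ≤ 1)
    (xstar : EuclideanSpace ℝ (Fin d))
    (hmin : IsLocalMin (distPotential A₁ A₂ lam) xstar) :
    ∃ U : Set (EuclideanSpace ℝ (Fin d)), IsOpen U ∧ xstar ∈ U ∧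
      (∀ x ∈ U, distPotential A₁ A₂ lam x =
        distPotential A₁ A₂ lam xstar + ‖x - xstar‖ ^ 2) ∧
      (∀ x ∈ U, x ≠ xstar →
        distPotential A₁ A₂ lam xstar < distPotential A₁ A₂ lam x) :=
  local_minimizers_quadratic_rigidity_moe_general d A₁ A₂ hA₁ hA₂ hA₁fin hA₂fin lam hlam₀ hlam₁
    xstar hmin
end
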